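/- Let γ ∈ (0,1], T > 0, and let B : [0,T] → ℝ^m be γ-Hölder continuous. For k ∈ ℕ let B^k be the dyadic piecewise linear interpolation of B with mesh T/2^k. Then for every α ∈ (0, γ), lim_{k → ∞} sup_{0 ≤ s < t ≤ T} |(B^k_t − B_t) − (B^k_s − B_s)|/(t − s)^α = 0; that is, B^k converges to B in the α-Hölder seminorm for every α < γ. -/

import Mathlib

open Set

/-- The dyadic piecewise linear interpolation of `B : [0,T] → ℝ^m` with mesh
`T / 2^k`: on each interval `[t_{ℓ-1}, t_ℓ]` with `t_ℓ = ℓ T / 2^k`,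
`B^k_t = B(t_{ℓ-1}) + (t - t_{ℓ-1}) (2^k / T) (B(t_ℓ) - B(t_{ℓ-1}))`. -/
noncomputable def dyadicInterp {m : ℕ} (T : ℝ) (k : ℕ) (B : ℝ → (Fin m → ℝ)) (t : ℝ) :
    Fin m → ℝ :=
  let ε : ℝ := T / 2 ^ k
  let l : ℕ := ⌊t / ε⌋₊
  B (l * ε) + ((t - l * ε) / ε) • (B ((l + 1) * ε) - B (l * ε))

/-!
Write `h = T / 2^k` and `e = B^k - B`. On each grid cell `B^k` is affine with slope of norm at
most `C h^γ / h`, so `B^k` is `C h^(γ-1)`-Lipschitz on `[0,T]`, while `‖e‖ ≤ 2 C h^γ`.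
For `t - s ≥ h` the sup bound gives `‖e_t - e_s‖ ≤ 4 C h^γ ≤ 4 C h^(γ-α) (t-s)^α`; for
`t - s ≤ h` the Lipschitz and Hölder bounds give
`C h^(γ-1) (t-s) + C (t-s)^γ ≤ 2 C h^(γ-α) (t-s)^α`. Since `γ > α`, `h^(γ-α) → 0`.
-/

open Filter Topology

section Interpolation

variable {E : Type*} [NormedAddCommGroup E] [NormedSpace ℝ E]

noncomputable def segmentInterp (h : ℝ) (B : ℝ → E) (n : ℕ) (t : ℝ) : E :=
  B (n * h) + ((t - n * h) / h) • (B ((n + 1) * h) - B (n * h))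

noncomputable def gridInterp (h : ℝ) (B : ℝ → E) (t : ℝ) : E :=
  segmentInterp h B ⌊t / h⌋₊ t

theorem dyadicInterp_eq_gridInterp {m : ℕ} (T : ℝ) (k : ℕ) (B : ℝ → Fin m → ℝ) :
    dyadicInterp T k B = gridInterp (T / 2 ^ k) B :=
  rfl

theorem segmentInterp_sub_segmentInterp (h : ℝ) (B : ℝ → E) (n : ℕ) (s t : ℝ) :
    segmentInterp h B n t - segmentInterp h B n s =
      ((t - s) / h) • (B ((n + 1) * h) - B (n * h)) := by
  simp only [segmentInterp]
  module

theorem gridInterp_eq_segmentInterp {h t : ℝ} {n : ℕ} (B : ℝ → E) (hh : 0 < h)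
    (hnt : n * h ≤ t) (htn : t ≤ (n + 1) * h) :
    gridInterp h B t = segmentInterp h B n t := by
  rcases htn.lt_or_eq with htn | rfl
  · have hnt' : (n : ℝ) ≤ t / h := (le_div_iff₀ hh).2 hnt
    have hfloor : ⌊t / h⌋₊ = n :=
      (Nat.floor_eq_iff ((Nat.cast_nonneg n).trans hnt')).2 ⟨hnt', (div_lt_iff₀ hh).2 htn⟩
    rw [gridInterp, hfloor]
  · have hfloor : ⌊(n + 1) * h / h⌋₊ = n + 1 := by
      rw [mul_div_cancel_right₀ _ hh.ne']
      exact_mod_cast Nat.floor_natCast (n + 1)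
    rw [gridInterp, hfloor]
    simp only [segmentInterp, Nat.cast_add_one, sub_self, zero_div, zero_smul, add_zero]
    rw [show ((n : ℝ) + 1) * h - n * h = h by ring, div_self hh.ne', one_smul, add_sub_cancel]

end Interpolation

section Cells

variable {E : Type*} [NormedAddCommGroup E]

theorem norm_sub_le_mul_of_forall_cell {f : ℝ → E} {h L s : ℝ} (K : ℕ)
    (hf : ∀ n < K, ∀ s t : ℝ, n * h ≤ s → s ≤ t → t ≤ (n + 1) * h → ‖f t - f s‖ ≤ L * (t - s))
    {t : ℝ} (hs : 0 ≤ s) (hst : s ≤ t) (ht : t ≤ K * h) :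
    ‖f t - f s‖ ≤ L * (t - s) := by
  induction K generalizing t with
  | zero =>
    obtain rfl : s = t := by simp only [CharP.cast_eq_zero, zero_mul] at ht; linarith
    simp
  | succ K ih =>
    have hfK : ∀ n < K, _ := fun n hn => hf n (Nat.lt_succ_of_lt hn)
    push_cast at ht
    by_cases htK : t ≤ K * h
    · exact ih hfK hst htK
    by_cases hsK : K * h ≤ s
    · exact hf K K.lt_succ_self s t hsK hst ht
    rw [not_le] at htK hsK
    calc ‖f t - f s‖ ≤ ‖f t - f (K * h)‖ + ‖f (K * h) - f s‖ :=
          norm_sub_le_norm_sub_add_norm_sub _ _ _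
      _ ≤ L * (t - K * h) + L * (K * h - s) :=
          add_le_add (hf K K.lt_succ_self _ _ le_rfl htK.le ht) (ih hfK hsK.le le_rfl)
      _ = L * (t - s) := by ring

theorem exists_lt_mem_cell {h t : ℝ} {K : ℕ} (hK : 0 < K) (ht0 : 0 ≤ t) (ht : t ≤ K * h) :
    ∃ n < K, n * h ≤ t ∧ t ≤ (n + 1) * h := by
  induction K with
  | zero => exact absurd hK (lt_irrefl 0)
  | succ K ih =>
    push_cast at ht
    by_cases hprev : 0 < K ∧ t ≤ K * h
    · obtain ⟨n, hn, hcell⟩ := ih hprev.1 hprev.2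
      exact ⟨n, Nat.lt_succ_of_lt hn, hcell⟩
    refine ⟨K, K.lt_succ_self, ?_, ht⟩
    rcases K.eq_zero_or_pos with rfl | hpos
    · simpa using ht0
    · exact (not_le.1 fun h' => hprev ⟨hpos, h'⟩).le

theorem norm_sub_le_of_holder_cell {B : ℝ → E} {h C γ T : ℝ} {n : ℕ}
    (hB : ∀ s t : ℝ, 0 ≤ s → s ≤ t → t ≤ T → ‖B t - B s‖ ≤ C * (t - s) ^ γ)
    (hh : 0 ≤ h) (hn : (n + 1) * h ≤ T) :
    ‖B ((n + 1) * h) - B (n * h)‖ ≤ C * h ^ γ := by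
  have := hB (n * h) ((n + 1) * h) (by positivity) (by linarith) hn
  rwa [show ((n : ℝ) + 1) * h - n * h = h by ring] at this

end Cells

section Holder

variable {E : Type*} [NormedAddCommGroup E] [NormedSpace ℝ E]
  {B : ℝ → E} {h C γ T s t : ℝ} {n K : ℕ}

theorem norm_segmentInterp_sub_segmentInterp_le
    (hB : ∀ s t : ℝ, 0 ≤ s → s ≤ t → t ≤ T → ‖B t - B s‖ ≤ C * (t - s) ^ γ)
    (hh : 0 < h) (hn : (n + 1) * h ≤ T) (hst : s ≤ t) :
    ‖segmentInterp h B n t - segmentInterp h B n s‖ ≤ C * h ^ (γ - 1) * (t - s) := by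
  rw [segmentInterp_sub_segmentInterp, norm_smul,
    Real.norm_of_nonneg (div_nonneg (sub_nonneg.2 hst) hh.le)]
  calc (t - s) / h * ‖B ((n + 1) * h) - B (n * h)‖ ≤ (t - s) / h * (C * h ^ γ) := by
        gcongr
        exact norm_sub_le_of_holder_cell hB hh.le hn
    _ = C * h ^ (γ - 1) * (t - s) := by
        rw [Real.rpow_sub_one hh.ne']
        ring

theorem norm_segmentInterp_sub_le
    (hB : ∀ s t : ℝ, 0 ≤ s → s ≤ t → t ≤ T → ‖B t - B s‖ ≤ C * (t - s) ^ γ)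
    (hC : 0 ≤ C) (hγ : 0 ≤ γ) (hh : 0 < h)
    (hnt : n * h ≤ t) (htn : t ≤ (n + 1) * h) (hn : (n + 1) * h ≤ T) :
    ‖segmentInterp h B n t - B t‖ ≤ 2 * C * h ^ γ := by
  set θ := (t - n * h) / h
  have hθ0 : 0 ≤ θ := div_nonneg (sub_nonneg.2 hnt) hh.le
  have hθ1 : θ ≤ 1 := (div_le_one hh).2 (by linarith)
  have hleft : ‖B t - B (n * h)‖ ≤ C * h ^ γ :=
    calc ‖B t - B (n * h)‖ ≤ C * (t - n * h) ^ γ :=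
          hB _ _ (by positivity) hnt (htn.trans hn)
      _ ≤ C * h ^ γ := by gcongr; linarith
  calc ‖segmentInterp h B n t - B t‖
        = ‖(B (n * h) - B t) + θ • (B ((n + 1) * h) - B (n * h))‖ := by
          rw [segmentInterp]
          congr 1
          abel
    _ ≤ ‖B (n * h) - B t‖ + ‖θ • (B ((n + 1) * h) - B (n * h))‖ := norm_add_le _ _
    _ = ‖B t - B (n * h)‖ + θ * ‖B ((n + 1) * h) - B (n * h)‖ := by
          rw [norm_sub_rev, norm_smul, Real.norm_of_nonneg hθ0]
    _ ≤ C * h ^ γ + 1 * (C * h ^ γ) :=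
          add_le_add hleft
            (mul_le_mul hθ1 (norm_sub_le_of_holder_cell hB hh.le hn) (norm_nonneg _) zero_le_one)
    _ = 2 * C * h ^ γ := by ring

theorem norm_gridInterp_sub_gridInterp_le
    (hB : ∀ s t : ℝ, 0 ≤ s → s ≤ t → t ≤ T → ‖B t - B s‖ ≤ C * (t - s) ^ γ)
    (hh : 0 < h) (hK : K * h = T) (hs : 0 ≤ s) (hst : s ≤ t) (ht : t ≤ T) :
    ‖gridInterp h B t - gridInterp h B s‖ ≤ C * h ^ (γ - 1) * (t - s) := by
  subst hK
  refine norm_sub_le_mul_of_forall_cell K (fun n hn s t hns hst htn => ?_) hs hst ht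
  rw [gridInterp_eq_segmentInterp B hh hns (hst.trans htn),
    gridInterp_eq_segmentInterp B hh (hns.trans hst) htn]
  exact norm_segmentInterp_sub_segmentInterp_le hB hh (by gcongr; exact_mod_cast hn) hst

theorem norm_gridInterp_sub_le
    (hB : ∀ s t : ℝ, 0 ≤ s → s ≤ t → t ≤ T → ‖B t - B s‖ ≤ C * (t - s) ^ γ)
    (hC : 0 ≤ C) (hγ : 0 ≤ γ) (hh : 0 < h) (hK : K * h = T) (hK0 : 0 < K)
    (ht0 : 0 ≤ t) (ht : t ≤ T) :
    ‖gridInterp h B t - B t‖ ≤ 2 * C * h ^ γ := by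
  subst hK
  obtain ⟨n, hn, hnt, htn⟩ := exists_lt_mem_cell hK0 ht0 ht
  rw [gridInterp_eq_segmentInterp B hh hnt htn]
  exact norm_segmentInterp_sub_le hB hC hγ hh hnt htn (by gcongr; exact_mod_cast hn)

end Holder

section Rpow

variable {h r α β γ : ℝ}

theorem rpow_sub_mul_rpow_eq (hh : 0 < h) (hr : 0 ≤ r) (γ β : ℝ) :
    h ^ (γ - β) * r ^ β = h ^ γ * (r / h) ^ β := by
  have : h ^ β ≠ 0 := by positivity
  rw [Real.rpow_sub hh, Real.div_rpow hr hh.le]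
  field_simp

theorem rpow_sub_mul_rpow_le_of_le (hh : 0 < h) (hhr : h ≤ r) (hβα : β ≤ α) :
    h ^ (γ - β) * r ^ β ≤ h ^ (γ - α) * r ^ α := by
  rw [rpow_sub_mul_rpow_eq hh (hh.le.trans hhr), rpow_sub_mul_rpow_eq hh (hh.le.trans hhr)]
  exact mul_le_mul_of_nonneg_left
    (Real.rpow_le_rpow_of_exponent_le ((one_le_div hh).2 hhr) hβα) (by positivity)

theorem rpow_sub_mul_rpow_le_of_ge (hr : 0 < r) (hrh : r ≤ h) (hαβ : α ≤ β) :
    h ^ (γ - β) * r ^ β ≤ h ^ (γ - α) * r ^ α := by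
  have hh : 0 < h := hr.trans_le hrh
  rw [rpow_sub_mul_rpow_eq hh hr.le, rpow_sub_mul_rpow_eq hh hr.le]
  exact mul_le_mul_of_nonneg_left
    (Real.rpow_le_rpow_of_exponent_ge (by positivity) ((div_le_one hh).2 hrh) hαβ) (by positivity)

end Rpow

theorem norm_gridInterp_sub_sub_le {E : Type*} [NormedAddCommGroup E] [NormedSpace ℝ E]
    {B : ℝ → E} {h C α γ T s t : ℝ} {K : ℕ}
    (hB : ∀ s t : ℝ, 0 ≤ s → s ≤ t → t ≤ T → ‖B t - B s‖ ≤ C * (t - s) ^ γ)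
    (hC : 0 ≤ C) (hα : 0 ≤ α) (hαγ : α ≤ γ) (hγ : γ ≤ 1)
    (hh : 0 < h) (hK : K * h = T) (hK0 : 0 < K) (hs : 0 ≤ s) (hst : s < t) (ht : t ≤ T) :
    ‖(gridInterp h B t - B t) - (gridInterp h B s - B s)‖ ≤
      4 * C * h ^ (γ - α) * (t - s) ^ α := by
  have hr : 0 < t - s := sub_pos.2 hst
  have hnonneg : 0 ≤ C * (h ^ (γ - α) * (t - s) ^ α) := by positivity
  rcases le_total h (t - s) with hle | hle
  · calc ‖(gridInterp h B t - B t) - (gridInterp h B s - B s)‖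
          ≤ ‖gridInterp h B t - B t‖ + ‖gridInterp h B s - B s‖ := norm_sub_le _ _
      _ ≤ 2 * C * h ^ γ + 2 * C * h ^ γ :=
          add_le_add (norm_gridInterp_sub_le hB hC (hα.trans hαγ) hh hK hK0 (by linarith) ht)
            (norm_gridInterp_sub_le hB hC (hα.trans hαγ) hh hK hK0 hs (by linarith))
      _ = 4 * C * (h ^ (γ - 0) * (t - s) ^ (0 : ℝ)) := by
          simp only [sub_zero, Real.rpow_zero]; ring
      _ ≤ 4 * C * h ^ (γ - α) * (t - s) ^ α := by
          rw [mul_assoc _ (h ^ _)]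
          exact mul_le_mul_of_nonneg_left (rpow_sub_mul_rpow_le_of_le hh hle hα) (by positivity)
  · calc ‖(gridInterp h B t - B t) - (gridInterp h B s - B s)‖
          = ‖(gridInterp h B t - gridInterp h B s) - (B t - B s)‖ := by rw [sub_sub_sub_comm]
      _ ≤ ‖gridInterp h B t - gridInterp h B s‖ + ‖B t - B s‖ := norm_sub_le _ _
      _ ≤ C * h ^ (γ - 1) * (t - s) + C * (t - s) ^ γ :=
          add_le_add (norm_gridInterp_sub_gridInterp_le hB hh hK hs hst.le ht)
            (hB s t hs hst.le ht)
      _ = C * (h ^ (γ - 1) * (t - s) ^ (1 : ℝ)) + C * (h ^ (γ - γ) * (t - s) ^ γ) := by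
          simp only [Real.rpow_one, sub_self, Real.rpow_zero]; ring
      _ ≤ C * (h ^ (γ - α) * (t - s) ^ α) + C * (h ^ (γ - α) * (t - s) ^ α) := by
          have hLip := rpow_sub_mul_rpow_le_of_ge (γ := γ) hr hle (hαγ.trans hγ)
          have hHol := rpow_sub_mul_rpow_le_of_ge (γ := γ) hr hle hαγ
          exact add_le_add (mul_le_mul_of_nonneg_left hLip hC) (mul_le_mul_of_nonneg_left hHol hC)
      _ ≤ 4 * C * h ^ (γ - α) * (t - s) ^ α := by linarith

theorem dyadic_interp_holder_convergence_general
    (γ T : ℝ) (hγ1 : γ ≤ 1)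
    (m : ℕ) (B : ℝ → (Fin m → ℝ)) (C : ℝ)
    (hB : ∀ s t : ℝ, 0 ≤ s → s ≤ t → t ≤ T → ‖B t - B s‖ ≤ C * (t - s) ^ γ) :
    ∀ α : ℝ, 0 < α → α < γ →
      ∀ ε : ℝ, 0 < ε → ∃ N : ℕ, ∀ k ≥ N, ∀ s t : ℝ, 0 ≤ s → s < t → t ≤ T →
        ‖(dyadicInterp T k B t - B t) - (dyadicInterp T k B s - B s)‖
          ≤ ε * (t - s) ^ α := by
  intro α hα hαγ ε hε
  have hB' : ∀ s t : ℝ, 0 ≤ s → s ≤ t → t ≤ T → ‖B t - B s‖ ≤ max C 0 * (t - s) ^ γ :=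
    fun s t hs hst ht => (hB s t hs hst ht).trans <|
      mul_le_mul_of_nonneg_right (le_max_left C 0) (Real.rpow_nonneg (sub_nonneg.2 hst) γ)
  have hmesh : Tendsto (fun k : ℕ => T / 2 ^ k) atTop (𝓝 0) :=
    tendsto_const_nhds.div_atTop (tendsto_pow_atTop_atTop_of_one_lt one_lt_two)
  have hlim : Tendsto (fun k : ℕ => 4 * max C 0 * (T / 2 ^ k) ^ (γ - α)) atTop (𝓝 0) := by
    have := (hmesh.rpow_const (Or.inr (sub_pos.2 hαγ).le)).const_mul (4 * max C 0)
    rwa [Real.zero_rpow (sub_pos.2 hαγ).ne', mul_zero] at this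
  obtain ⟨N, hN⟩ := eventually_atTop.1 (hlim.eventually (ge_mem_nhds hε))
  refine ⟨N, fun k hk s t hs hst ht => ?_⟩
  have hT : 0 < T := by linarith
  rw [dyadicInterp_eq_gridInterp]
  calc _ ≤ 4 * max C 0 * (T / 2 ^ k) ^ (γ - α) * (t - s) ^ α :=
        norm_gridInterp_sub_sub_le (K := 2 ^ k) hB' (le_max_right C 0) hα.le hαγ.le hγ1
          (by positivity) (by push_cast; field_simp) (Nat.two_pow_pos k) hs hst ht
    _ ≤ ε * (t - s) ^ α :=
        mul_le_mul_of_nonneg_right (hN k hk) (Real.rpow_nonneg (sub_nonneg.2 hst.le) α)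

/-- If `B` is `γ`-Hölder continuous on `[0,T]`, then for every `α ∈ (0, γ)` the
dyadic piecewise linear interpolations `B^k` converge to `B` in the `α`-Hölder
seminorm, i.e. `sup_{0 ≤ s < t ≤ T} |(B^k_t - B_t) - (B^k_s - B_s)|/(t-s)^α → 0`
as `k → ∞`. -/
theorem dyadic_interp_holder_convergence
    (γ T : ℝ) (hγ0 : 0 < γ) (hγ1 : γ ≤ 1) (hT : 0 < T)
    (m : ℕ) (B : ℝ → (Fin m → ℝ)) (C : ℝ)
    (hB : ∀ s t : ℝ, 0 ≤ s → s ≤ t → t ≤ T → ‖B t - B s‖ ≤ C * (t - s) ^ γ) :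
    ∀ α : ℝ, 0 < α → α < γ →
      ∀ ε : ℝ, 0 < ε → ∃ N : ℕ, ∀ k ≥ N, ∀ s t : ℝ, 0 ≤ s → s < t → t ≤ T →
        ‖(dyadicInterp T k B t - B t) - (dyadicInterp T k B s - B s)‖
          ≤ ε * (t - s) ^ α :=
  dyadic_interp_holder_convergence_general γ T hγ1 m B C hB
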